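/- With K the closed unit disk and f(r,θ) = (r/2,θ), g(r,θ) = (r, 2θ mod 2π) as above, the sequence y_m = (1, π/2^m) (in polar coordinates) satisfies ‖x − y_m‖ = [2(1 − cos(π/2^m))]^{1/2} → 0 as m → ∞, where x = (1,0), while for all n, m ∈ ℕ, ‖f^{n+1} g^m(x) − f^{n+1} g^m(y_m)‖ = 1/2^n. -/

import Mathlib

open Metric Real Filter

/-- `f(r,θ) = (r/2, θ)` in polar coordinates, i.e. scaling by `1/2`. -/
noncomputable def fmap : EuclideanSpace ℝ (Fin 2) → EuclideanSpace ℝ (Fin 2) :=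
  fun p => (1 / 2 : ℝ) • p

open Classical in
/-- `g(r,θ) = (r, 2θ mod 2π)` in polar coordinates; in Cartesian coordinates this is the
angle-doubling map `p ↦ ‖p‖⁻¹ • (p₀² − p₁², 2 p₀ p₁)` (and `g(0) = 0`). -/
noncomputable def gmap : EuclideanSpace ℝ (Fin 2) → EuclideanSpace ℝ (Fin 2) :=
  fun p => if p = 0 then 0 else ‖p‖⁻¹ • WithLp.toLp 2 ![(p 0) ^ 2 - (p 1) ^ 2, 2 * (p 0) * (p 1)]

/-- The point with polar coordinates `(r, θ)`. -/
noncomputable def pt (r θ : ℝ) : EuclideanSpace ℝ (Fin 2) := WithLp.toLp 2 ![r * Real.cos θ, r * Real.sin θ]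

/-
`f` is the homothety of ratio `1/2` and `g^m` multiplies angles by `2^m`, so `g^m` fixes
`x = (1,0)` and carries `y_m = (1, π/2^m)` to the antipodal point `(1, π)`. Thus
`f^{n+1} g^m` sends the pair to two antipodal points of the circle of radius `1/2^{n+1}`, at
distance `1/2^n`, although `‖x − y_m‖`, a chord of the unit circle subtending the angle
`π/2^m`, tends to `0`.
-/

lemma norm_pt (r θ : ℝ) : ‖pt r θ‖ = |r| := by
  rw [EuclideanSpace.norm_eq, Fin.sum_univ_two, ← Real.sqrt_sq_eq_abs]
  congr 1
  simp only [pt, PiLp.toLp_apply, Matrix.cons_val_zero, Matrix.cons_val_one, Real.norm_eq_abs,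
    sq_abs]
  linear_combination r ^ 2 * sin_sq_add_cos_sq θ

lemma pt_zero_left (θ : ℝ) : pt 0 θ = 0 := by
  ext i
  fin_cases i <;> simp [pt]

lemma gmap_pt {r : ℝ} (hr : 0 ≤ r) (θ : ℝ) : gmap (pt r θ) = pt r (2 * θ) := by
  rcases hr.eq_or_lt with rfl | hr
  · simp [gmap, pt_zero_left]
  have hne : pt r θ ≠ 0 := norm_ne_zero_iff.mp (by rw [norm_pt]; exact abs_ne_zero.mpr hr.ne')
  rw [gmap, if_neg hne, norm_pt, abs_of_pos hr]
  ext i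
  fin_cases i
  · simp [pt, cos_two_mul', field]
  · simp [pt, sin_two_mul, field]

lemma gmap_iterate_pt {r : ℝ} (hr : 0 ≤ r) (m : ℕ) (θ : ℝ) :
    gmap^[m] (pt r θ) = pt r (2 ^ m * θ) := by
  induction m with
  | zero => simp
  | succ k ih => rw [Function.iterate_succ_apply', ih, gmap_pt hr, pow_succ, mul_comm _ 2, mul_assoc]

lemma fmap_iterate (k : ℕ) (p : EuclideanSpace ℝ (Fin 2)) : fmap^[k] p = (1 / 2 : ℝ) ^ k • p := by
  induction k with
  | zero => simp
  | succ j ih => rw [Function.iterate_succ_apply', ih, fmap, smul_smul, pow_succ']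

lemma norm_pt_one_sub_pt_one (α β : ℝ) :
    ‖pt 1 α - pt 1 β‖ = √(2 * (1 - cos (α - β))) := by
  rw [EuclideanSpace.norm_eq, Fin.sum_univ_two]
  congr 1
  simp only [pt, PiLp.sub_apply, Matrix.cons_val_zero, Matrix.cons_val_one,
    one_mul, Real.norm_eq_abs, sq_abs, cos_sub]
  linear_combination sin_sq_add_cos_sq α + sin_sq_add_cos_sq β

/-- with `x = (1,0)` and `y_m = (1, π/2^m)` in polar coordinates,
`‖x − y_m‖ = [2(1 − cos(π/2^m))]^{1/2} → 0`, while
`‖f^{n+1} g^m (x) − f^{n+1} g^m (y_m)‖ = 1/2^n` for all `n, m`. -/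
theorem distance_estimates :
    (∀ m : ℕ, ‖pt 1 0 - pt 1 (π / 2 ^ m)‖ = Real.sqrt (2 * (1 - Real.cos (π / 2 ^ m)))) ∧
    Tendsto (fun m : ℕ => ‖pt 1 0 - pt 1 (π / 2 ^ m)‖) atTop (nhds 0) ∧
    (∀ n m : ℕ,
      ‖fmap^[n + 1] (gmap^[m] (pt 1 0)) - fmap^[n + 1] (gmap^[m] (pt 1 (π / 2 ^ m)))‖
        = 1 / 2 ^ n) := by
  have chord (m : ℕ) : ‖pt 1 0 - pt 1 (π / 2 ^ m)‖ = √(2 * (1 - cos (π / 2 ^ m))) := by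
    rw [norm_pt_one_sub_pt_one, zero_sub, cos_neg]
  refine ⟨chord, ?_, fun n m => ?_⟩
  · have hangle : Tendsto (fun m : ℕ => π / 2 ^ m) atTop (nhds 0) :=
      tendsto_const_nhds.div_atTop (tendsto_pow_atTop_atTop_of_one_lt one_lt_two)
    have hcont : Continuous fun α : ℝ => √(2 * (1 - cos α)) := by fun_prop
    have hlim := (hcont.tendsto 0).comp hangle
    rw [cos_zero, sub_self, mul_zero, sqrt_zero] at hlim
    exact hlim.congr fun m => (chord m).symm
  · have hx : gmap^[m] (pt 1 0) = pt 1 0 := by rw [gmap_iterate_pt zero_le_one, mul_zero]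
    have hy : gmap^[m] (pt 1 (π / 2 ^ m)) = pt 1 π := by
      rw [gmap_iterate_pt zero_le_one, mul_div_cancel₀ _ (by positivity)]
    have hantipodal : ‖pt 1 0 - pt 1 π‖ = 2 := by
      rw [norm_pt_one_sub_pt_one, zero_sub, cos_neg, cos_pi]
      norm_num
    rw [hx, hy, fmap_iterate, fmap_iterate, ← smul_sub, norm_smul, hantipodal]
    simp [pow_succ]
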